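/- If n is an even positive integer, then for all integers h and m, c_n(h + m·n/2) = (−1)^m c_n(h). -/

import Mathlib

open Polynomial Finset

/-- The Ramanujan sum `c_n(r) = ∑_{1 ≤ j ≤ n, gcd(j,n)=1} e^{2πijr/n}`. -/
noncomputable def ramanujanSum (n : ℕ) (r : ℤ) : ℂ :=
  ∑ j ∈ Finset.Icc 1 n, if Nat.gcd j n = 1 then
    Complex.exp (2 * (Real.pi : ℂ) * Complex.I * (j : ℂ) * (r : ℂ) / (n : ℂ)) else 0

/-! For even `n`, shifting `r` by `n / 2` changes the phase `e^{2πijr/n}` by `e^{πij} = (-1)^j`,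
and every `j` coprime to `n` is odd. -/

open Complex
open scoped Real

lemma Nat.Coprime.odd_of_even_right {j n : ℕ} (hcop : j.Coprime n) (hn : Even n) : Odd j :=
  (hcop.coprime_dvd_right hn.two_dvd).odd_of_right

lemma exp_two_pi_I_mul_add_half_period {n j : ℕ} (hn : n ≠ 0) (hne : Even n) (hj : Odd j)
    (r m : ℤ) :
    exp (2 * (π : ℂ) * I * j * ((r + m * ((n / 2 : ℕ) : ℤ) : ℤ) : ℂ) / n) =
      (-1) ^ m * exp (2 * (π : ℂ) * I * j * r / n) := by
  obtain ⟨k, rfl⟩ := hne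
  have hk : (k : ℂ) ≠ 0 := by exact_mod_cast (by omega : k ≠ 0)
  have hsplit :
      2 * (π : ℂ) * I * j * ((r + m * (((k + k) / 2 : ℕ) : ℤ) : ℤ) : ℂ) / ((k + k : ℕ) : ℂ) =
        ((j * m : ℤ) : ℂ) * (π * I) + 2 * (π : ℂ) * I * j * r / ((k + k : ℕ) : ℂ) := by
    rw [show (k + k) / 2 = k by omega]
    push_cast
    field_simp
    ring
  rw [hsplit, exp_add, exp_int_mul, exp_pi_mul_I, zpow_mul, zpow_natCast, hj.neg_one_pow]

theorem ramanujan_half_period (n : ℕ) (hne : Even n) (h m : ℤ) :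
    ramanujanSum n (h + m * ((n / 2 : ℕ) : ℤ)) = (-1 : ℂ) ^ m * ramanujanSum n h := by
  rw [ramanujanSum, ramanujanSum, mul_sum]
  refine sum_congr rfl fun j hj => ?_
  split_ifs with hcop
  · have hn : n ≠ 0 := by grind
    exact exp_two_pi_I_mul_add_half_period hn hne (Nat.Coprime.odd_of_even_right hcop hne) h m
  · rw [mul_zero]
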